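/- Fix integers n ≥ 2 and k ≥ 3, and set γ_k := 1/2 − 1/k. For A₁ > 0 let Z₁(u) := A₁ u^{−2}(1 − u²)^{1+2γ_k} on (0,1). Then there exists a constant C, depending only on n and k, such that |Q_u[Z₁](u)| ≤ C A₁² u^{−6}(1 − u²)^{4γ_k} for all u ∈ (0,1). -/

import Mathlib

open Topology Filter Asymptotics Set

/-- `γ_k = 1/2 - 1/k`. -/
noncomputable def gam (k : ℕ) : ℝ := 1/2 - 1/(k:ℝ)

/-- The quadratic operator `Q_u[Z] = Z Z'' - (1/2)(Z')² - Z Z'/u - 2(n-1)Z²/u²`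
applied to a function of `u` alone. -/
noncomputable def Qop (n : ℕ) (Z : ℝ → ℝ) (u : ℝ) : ℝ :=
  Z u * deriv (deriv Z) u - (1/2) * (deriv Z u)^2
    - Z u * deriv Z u / u - 2 * ((n:ℝ) - 1) * (Z u)^2 / u^2

/-! Writing `Z' = Z L` with the logarithmic derivative `L`, one has `Z'' = Z (L² + L')`, so
`Q_u[Z] = Z² (L²/2 + L' - L/u - 2(n-1)/u²)`. For `Z = A u^a (1-u²)^p` the logarithmic derivative
`L = a/u - 2pu/(1-u²)` is rational, and the bracket equals `P(u)/(u²(1-u²)²)` with `P` a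
combination of `(1-u²)²`, `u²(1-u²)` and `u⁴`, which is bounded on `(0,1)`. -/

theorem Qop_eq_of_hasDerivAt_mul (n : ℕ) {Z L : ℝ → ℝ} {L' u : ℝ}
    (hZ : ∀ᶠ x in 𝓝 u, HasDerivAt Z (Z x * L x) x) (hL : HasDerivAt L L' u) :
    Qop n Z u = Z u ^ 2 * (L u ^ 2 / 2 + L' - L u / u - 2 * ((n:ℝ) - 1) / u ^ 2) := by
  have hZ' : deriv Z =ᶠ[𝓝 u] fun x => Z x * L x := hZ.mono fun x hx => hx.deriv
  have hZ'' : deriv (deriv Z) u = Z u * L u * L u + Z u * L' := by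
    rw [hZ'.deriv_eq]
    exact (hZ.self_of_nhds.mul hL).deriv
  rw [Qop, hZ'.self_of_nhds, hZ'']
  ring

theorem hasDerivAt_one_sub_sq (x : ℝ) : HasDerivAt (fun y : ℝ => 1 - y ^ 2) (-(2 * x)) x := by
  simpa using (hasDerivAt_pow 2 x).const_sub 1

theorem hasDerivAt_rpow_mul_one_sub_sq_rpow (A a p : ℝ) {x : ℝ} (hx : x ≠ 0)
    (hx' : 1 - x ^ 2 ≠ 0) :
    HasDerivAt (fun y => A * y ^ a * (1 - y ^ 2) ^ p)
      (A * x ^ a * (1 - x ^ 2) ^ p * (a / x - 2 * p * x / (1 - x ^ 2))) x := by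
  have hs := hasDerivAt_one_sub_sq x
  refine (((Real.hasDerivAt_rpow_const (Or.inl hx)).const_mul A).mul
    (hs.rpow_const (Or.inl hx'))).congr_deriv ?_
  rw [Real.rpow_sub_one hx, Real.rpow_sub_one hx']
  field_simp
  ring

theorem hasDerivAt_div_sub_mul_div_one_sub_sq (a p : ℝ) {x : ℝ} (hx : x ≠ 0)
    (hx' : 1 - x ^ 2 ≠ 0) :
    HasDerivAt (fun y => a / y - 2 * p * y / (1 - y ^ 2))
      (-a / x ^ 2 - 2 * p * (1 + x ^ 2) / (1 - x ^ 2) ^ 2) x := by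
  have hs := hasDerivAt_one_sub_sq x
  refine (((hasDerivAt_const x a).div (hasDerivAt_id x) hx).sub
    (((hasDerivAt_id x).const_mul (2 * p)).div hs hx')).congr_deriv ?_
  simp only [id]
  field_simp
  ring

theorem Qop_rpow_mul_one_sub_sq_rpow (n : ℕ) (A a p : ℝ) {u : ℝ} (hu : u ∈ Ioo 0 1) :
    Qop n (fun x => A * x ^ a * (1 - x ^ 2) ^ p) u
      = A ^ 2 * u ^ (2 * a - 2) * (1 - u ^ 2) ^ (2 * p - 2) *
        ((a ^ 2 / 2 - 2 * a - 2 * ((n:ℝ) - 1)) * (1 - u ^ 2) ^ 2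
          - 2 * p * a * u ^ 2 * (1 - u ^ 2) + (2 * p ^ 2 - 4 * p) * u ^ 4) := by
  obtain ⟨hu0, hu1⟩ := hu
  have hs : 0 < 1 - u ^ 2 := by nlinarith
  have hZ : ∀ᶠ x in 𝓝 u, HasDerivAt (fun y => A * y ^ a * (1 - y ^ 2) ^ p)
      (A * x ^ a * (1 - x ^ 2) ^ p * (a / x - 2 * p * x / (1 - x ^ 2))) x := by
    filter_upwards [Ioo_mem_nhds hu0 hu1] with x ⟨hx0, hx1⟩
    exact hasDerivAt_rpow_mul_one_sub_sq_rpow A a p hx0.ne' (by nlinarith)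
  rw [Qop_eq_of_hasDerivAt_mul n hZ (hasDerivAt_div_sub_mul_div_one_sub_sq a p hu0.ne' hs.ne'),
    Real.rpow_sub hu0, Real.rpow_sub hs, mul_comm 2 a, mul_comm 2 p, Real.rpow_mul hu0.le,
    Real.rpow_mul hs.le]
  simp only [Real.rpow_two]
  field_simp
  ring

theorem abs_bernstein_two_combination_le (α β δ : ℝ) {t : ℝ} (ht₀ : 0 ≤ t) (ht₁ : t ≤ 1) :
    |α * (1 - t) ^ 2 + β * t * (1 - t) + δ * t ^ 2| ≤ |α| + |β| + |δ| := by
  have h₀ : 0 ≤ t * (1 - t) := by nlinarith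
  have h₁ : (1 - t) ^ 2 ≤ 1 := by nlinarith
  have h₂ : t * (1 - t) ≤ 1 := by nlinarith
  have h₃ : t ^ 2 ≤ 1 := by nlinarith
  calc |α * (1 - t) ^ 2 + β * t * (1 - t) + δ * t ^ 2|
      ≤ |α * (1 - t) ^ 2| + |β * (t * (1 - t))| + |δ * t ^ 2| := by
        rw [← mul_assoc]; exact abs_add_three _ _ _
    _ = |α| * (1 - t) ^ 2 + |β| * (t * (1 - t)) + |δ| * t ^ 2 := by
        rw [abs_mul α, abs_mul β, abs_mul δ, abs_of_nonneg h₀, abs_of_nonneg (sq_nonneg (1 - t)),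
          abs_of_nonneg (sq_nonneg t)]
    _ ≤ |α| * 1 + |β| * 1 + |δ| * 1 := by gcongr
    _ = |α| + |β| + |δ| := by ring

theorem exists_abs_Qop_rpow_mul_one_sub_sq_rpow_le (n : ℕ) (a p : ℝ) :
    ∃ C : ℝ, ∀ A u : ℝ, u ∈ Ioo 0 1 →
      |Qop n (fun x => A * x ^ a * (1 - x ^ 2) ^ p) u|
        ≤ C * A ^ 2 * u ^ (2 * a - 2) * (1 - u ^ 2) ^ (2 * p - 2) := by
  refine ⟨|a ^ 2 / 2 - 2 * a - 2 * ((n:ℝ) - 1)| + |-(2 * p * a)| + |2 * p ^ 2 - 4 * p|,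
    fun A u hu => ?_⟩
  have hu0 := hu.1
  have hs : 0 < 1 - u ^ 2 := by nlinarith [hu.2]
  have hP := abs_bernstein_two_combination_le (a ^ 2 / 2 - 2 * a - 2 * ((n:ℝ) - 1))
    (-(2 * p * a)) (2 * p ^ 2 - 4 * p) (sq_nonneg u) (by linarith)
  have hE : 0 ≤ A ^ 2 * u ^ (2 * a - 2) * (1 - u ^ 2) ^ (2 * p - 2) := by positivity
  rw [Qop_rpow_mul_one_sub_sq_rpow n A a p hu, abs_mul, abs_of_nonneg hE]
  calc _ ≤ A ^ 2 * u ^ (2 * a - 2) * (1 - u ^ 2) ^ (2 * p - 2) *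
        (|a ^ 2 / 2 - 2 * a - 2 * ((n:ℝ) - 1)| + |-(2 * p * a)| + |2 * p ^ 2 - 4 * p|) := by
        gcongr
        exact (congrArg abs (by ring)).trans_le hP
    _ = _ := by ring

theorem stmt1 (n k : ℕ) :
    ∃ C : ℝ, ∀ A₁ : ℝ, 0 < A₁ → ∀ u ∈ Set.Ioo (0:ℝ) 1,
      |Qop n (fun x => A₁ * x ^ (-2:ℝ) * (1 - x^2) ^ (1 + 2 * gam k)) u|
        ≤ C * A₁^2 * u ^ (-6:ℝ) * (1 - u^2) ^ (4 * gam k) := by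
  obtain ⟨C, hC⟩ := exists_abs_Qop_rpow_mul_one_sub_sq_rpow_le n (-2) (1 + 2 * gam k)
  refine ⟨C, fun A _ u hu => ?_⟩
  have h := hC A u hu
  rwa [show 2 * (-2:ℝ) - 2 = -6 by norm_num, show 2 * (1 + 2 * gam k) - 2 = 4 * gam k by ring]
    at h
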